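/- arXiv:2404.08486 — 7 statements merged into one kernel-verified Lean document; each statement's English description precedes it below -/
import Mathlib

section
/- Let R be a commutative ring equipped with a power structure (b_n)_{n∈ℕ}, and let u ∈ R be an element such that b_j(u) = u^j for all j ∈ ℕ. Then for all natural numbers m and n one has b_n(m·u) = C(m+n−1, n)·u^n, where C denotes the binomial coefficient. (This abstracts the paper's Lemma a_n(m⟨(−1)^i⟩) = C(m+n−1, n)⟨(−1)^{in}⟩ in GW(k), applied with u = ⟨(−1)^i⟩.) -/
lemma choose_hockey (m n : ℕ) :
    ∑ i ∈ Finset.range (n + 1), (m + i - 1).choose i = (m + n).choose n := by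
  induction n with
  | zero => simp
  | succ n ih =>
    rw [Finset.sum_range_succ, ih]
    have h1 : m + (n + 1) - 1 = m + n := by omega
    rw [h1, show m + (n + 1) = (m + n) + 1 from rfl, Nat.choose_succ_succ]

/-- If `b` is a power structure on a commutative ring `R` and `u ∈ R` satisfies
`b j u = u ^ j` for all `j`, then `b n (m • u) = C(m + n - 1, n) • u ^ n`. -/
theorem power_structure_on_multiples_of_u
    {R : Type*} [CommRing R] (b : ℕ → R → R)
    (hb0 : ∀ r : R, b 0 r = 1)
    (hb1 : ∀ r : R, b 1 r = r)
    (hzero : ∀ n : ℕ, 1 ≤ n → b n (0 : R) = 0)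
    (hone : ∀ n : ℕ, 1 ≤ n → b n (1 : R) = 1)
    (hadd : ∀ (n : ℕ) (r s : R),
      b n (r + s) = ∑ i ∈ Finset.range (n + 1), b i r * b (n - i) s)
    (u : R) (hu : ∀ j : ℕ, b j u = u ^ j)
    (m n : ℕ) :
    b n ((m : R) * u) = ((m + n - 1).choose n : R) * u ^ n := by
  induction m generalizing n with
  | zero =>
    rcases Nat.eq_zero_or_pos n with rfl | hn
    · simp [hb0]
    · simp only [Nat.cast_zero, zero_mul, hzero n hn]
      rw [Nat.choose_eq_zero_of_lt (by omega)]
      simp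
  | succ m ih =>
    have : ((m + 1 : ℕ) : R) * u = (m : R) * u + u := by push_cast; ring
    rw [this, hadd]
    have : ∀ i ∈ Finset.range (n + 1),
        b i ((m : R) * u) * b (n - i) u
          = ((m + i - 1).choose i : R) * u ^ n := by
      intro i hi
      have hi' : i ≤ n := by simpa [Nat.lt_succ_iff] using hi
      rw [ih i, hu (n - i), mul_assoc, ← pow_add, Nat.add_sub_cancel' hi']
    rw [Finset.sum_congr rfl this, ← Finset.sum_mul, ← Nat.cast_sum,
      choose_hockey]
    have : m + 1 + n - 1 = m + n := by omega
    rw [this]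
end

section
/- Let R be a commutative ring equipped with a power structure (b_n)_{n∈ℕ}, and let u ∈ R be an element such that b_j(u) = u^j for all j ∈ ℕ. Then for every integer m ≥ 1 and every natural number n, b_n(m·(1 + u)) = ∑_{i=0}^{n} C(m+i−1, m−1)·C(m+n−i−1, m−1)·u^{n−i}, where C denotes the binomial coefficient. (This abstracts the positive case of the paper's Lemma on a_n(m·ℍ) in GW(k), where ℍ = ⟨1⟩ + ⟨−1⟩ is the hyperbolic form and u = ⟨−1⟩.) -/
open PowerSeries Finset

private lemma hockey_aux (M n : ℕ) :
    ∑ i ∈ Finset.range (n + 1), (M + i).choose M = (M + 1 + n).choose (M + 1) := by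
  induction n with
  | zero => simp
  | succ n ih =>
      rw [Finset.sum_range_succ, ih]
      have : M + 1 + (n + 1) = (M + 1 + n) + 1 := by omega
      rw [this, Nat.choose_succ_succ' (M + 1 + n) M,
        show M + (n + 1) = M + 1 + n from by omega, Nat.add_comm]

private lemma one_pow_series_coeff {R : Type*} [CommRing R] (M n : ℕ) :
    (PowerSeries.coeff (R := R) n) ((PowerSeries.mk (fun _ => (1 : R))) ^ (M + 1)) =
      ((M + n).choose M : R) := by
  induction M generalizing n with
  | zero => simp
  | succ M ih =>
      rw [pow_succ, PowerSeries.coeff_mul,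
        Finset.Nat.sum_antidiagonal_eq_sum_range_succ_mk]
      simp only [ih, PowerSeries.coeff_mk, mul_one]
      rw [← Nat.cast_sum]
      exact_mod_cast congrArg (Nat.cast (R := R)) (hockey_aux M n)

/-- If `b` is a power structure on a commutative ring `R` and `u ∈ R` satisfies
`b j u = u ^ j` for all `j`, then for `m ≥ 1`,
`b n (m • (1 + u)) = ∑_{i=0}^n C(m+i-1, m-1) * C(m+n-i-1, m-1) * u^(n-i)`. -/
theorem power_structure_on_positive_multiples_of_hyperbolic
    {R : Type*} [CommRing R] (b : ℕ → R → R)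
    (hb0 : ∀ r : R, b 0 r = 1)
    (hb1 : ∀ r : R, b 1 r = r)
    (hzero : ∀ n : ℕ, 1 ≤ n → b n (0 : R) = 0)
    (hone : ∀ n : ℕ, 1 ≤ n → b n (1 : R) = 1)
    (hadd : ∀ (n : ℕ) (r s : R),
      b n (r + s) = ∑ i ∈ Finset.range (n + 1), b i r * b (n - i) s)
    (u : R) (hu : ∀ j : ℕ, b j u = u ^ j)
    (m : ℕ) (hm : 1 ≤ m) (n : ℕ) :
    b n ((m : R) * (1 + u)) =
      ∑ i ∈ Finset.range (n + 1),
        ((m + i - 1).choose (m - 1) : R) * ((m + n - i - 1).choose (m - 1) : R)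
          * u ^ (n - i) := by
  set O : PowerSeries R := PowerSeries.mk (fun _ => (1 : R)) with hO
  set A : PowerSeries R := PowerSeries.mk (fun k => u ^ k) with hA
  -- b of one copy of (1+u)
  have hbone : ∀ i : ℕ, b i (1 : R) = 1 := by
    intro i
    cases i with
    | zero => exact hb0 1
    | succ i => exact hone _ (Nat.succ_le_succ (Nat.zero_le _))
  have L1 : ∀ k : ℕ, b k (1 + u) = PowerSeries.coeff (R := R) k (O * A) := by
    intro k
    rw [hadd, PowerSeries.coeff_mul, Finset.Nat.sum_antidiagonal_eq_sum_range_succ_mk]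
    refine Finset.sum_congr rfl fun i hi => ?_
    simp [hbone, hu, hO, hA]
  -- b of m copies
  have L2 : ∀ (M : ℕ) (k : ℕ), b k ((M : R) * (1 + u)) =
      PowerSeries.coeff (R := R) k ((O * A) ^ M) := by
    intro M
    induction M with
    | zero =>
        intro k
        cases k with
        | zero => simpa using hb0 0
        | succ k =>
            simp only [Nat.cast_zero, zero_mul, pow_zero]
            rw [hzero _ (Nat.succ_le_succ (Nat.zero_le _)),
              PowerSeries.coeff_one]
            simp
    | succ M ih =>
        intro k
        have : ((M + 1 : ℕ) : R) * (1 + u) = (1 + u) + (M : R) * (1 + u) := by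
          push_cast; ring
        rw [this, hadd, pow_succ', PowerSeries.coeff_mul,
          Finset.Nat.sum_antidiagonal_eq_sum_range_succ_mk]
        refine Finset.sum_congr rfl fun i hi => ?_
        rw [L1, ih]
  -- A = rescale u O
  have hAO : A = PowerSeries.rescale u O := by
    ext k
    simp [hA, hO, PowerSeries.coeff_rescale]
  obtain ⟨M, rfl⟩ : ∃ M, m = M + 1 := ⟨m - 1, by omega⟩
  rw [L2, mul_pow, hAO, ← map_pow, PowerSeries.coeff_mul,
    Finset.Nat.sum_antidiagonal_eq_sum_range_succ_mk]
  refine Finset.sum_congr rfl fun i hi => ?_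
  rw [Finset.mem_range] at hi
  rw [one_pow_series_coeff, PowerSeries.coeff_rescale, one_pow_series_coeff]
  have e1 : M + 1 + i - 1 = M + i := by omega
  have e2 : M + 1 + n - i - 1 = M + (n - i) := by omega
  have e3 : M + 1 - 1 = M := by omega
  rw [e1, e2, e3]
  ring
end

section
/- Let R be a commutative ring equipped with a power structure (b_n)_{n∈ℕ}, and let u ∈ R be an element such that b_j(u) = u^j for all j ∈ ℕ. Then for all natural numbers m and n, b_n(−(m·(1 + u))) = (−1)^n·∑_{i=0}^{n} C(m, i)·C(m, n−i)·u^{n−i}, where C denotes the binomial coefficient. (This abstracts the negative case of the paper's Lemma on a_n(m·ℍ) in GW(k), where ℍ = ⟨1⟩ + ⟨−1⟩ is the hyperbolic form and u = ⟨−1⟩.) -/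
open PowerSeries
set_option maxRecDepth 8000

private lemma coeff_one_sub_C_mul_X_pow {R : Type*} [CommRing R] (a : R) (m n : ℕ) :
    (PowerSeries.coeff (R := R) n) ((1 - PowerSeries.C (R := R) a * X) ^ m) =
      (m.choose n : R) * (-a) ^ n := by
  have h1 : (1 - PowerSeries.C (R := R) a * X) = (PowerSeries.C (R := R) (-a) * X + 1) := by
    simp; ring
  rw [h1, add_pow, map_sum]
  have hterm : ∀ k ∈ Finset.range (m + 1),
      (PowerSeries.coeff (R := R) n) ((PowerSeries.C (R := R) (-a) * X) ^ k * 1 ^ (m - k) * (m.choose k : R⟦X⟧)) =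
        if n = k then (m.choose k : R) * (-a) ^ n else 0 := by
    intro k _
    rw [one_pow, mul_one, mul_pow, ← map_pow, ← map_natCast (PowerSeries.C (R := R)) (m.choose k)]
    rw [mul_comm, ← mul_assoc, ← map_mul, coeff_C_mul, coeff_X_pow]
    split
    · subst ‹n = k›; ring
    · simp
  rw [Finset.sum_congr rfl hterm]
  by_cases h : n ≤ m
  · rw [Finset.sum_ite_eq (Finset.range (m+1)) n]
    simp [Nat.lt_succ_of_le h]
  · rw [Finset.sum_eq_zero fun k hk => ?_]
    · rw [Nat.choose_eq_zero_of_lt (not_le.mp h)]; simp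
    · rw [if_neg]; rintro rfl; exact h (Nat.lt_succ_iff.mp (Finset.mem_range.mp hk))

/-- If `b` is a power structure on a commutative ring `R` and `u ∈ R` satisfies
`b j u = u ^ j` for all `j`, then
`b n (-(m • (1 + u))) = (-1)^n * ∑_{i=0}^n C(m, i) * C(m, n-i) * u^(n-i)`. -/
theorem power_structure_on_negative_multiples_of_hyperbolic
    {R : Type*} [CommRing R] (b : ℕ → R → R)
    (hb0 : ∀ r : R, b 0 r = 1)
    (hb1 : ∀ r : R, b 1 r = r)
    (hzero : ∀ n : ℕ, 1 ≤ n → b n (0 : R) = 0)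
    (hone : ∀ n : ℕ, 1 ≤ n → b n (1 : R) = 1)
    (hadd : ∀ (n : ℕ) (r s : R),
      b n (r + s) = ∑ i ∈ Finset.range (n + 1), b i r * b (n - i) s)
    (u : R) (hu : ∀ j : ℕ, b j u = u ^ j)
    (m n : ℕ) :
    b n (-((m : R) * (1 + u))) =
      (-1 : R) ^ n * ∑ i ∈ Finset.range (n + 1),
        (m.choose i : R) * (m.choose (n - i) : R) * u ^ (n - i) := by
  classical
  set F : R → R⟦X⟧ := fun x => PowerSeries.mk (fun k => b k x) with hF
  -- multiplicativity
  have hmul : ∀ r s : R, F (r + s) = F r * F s := by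
    intro r s
    ext k
    rw [coeff_mul, Finset.Nat.sum_antidiagonal_eq_sum_range_succ_mk]
    simp [hF, hadd]
  have hF0 : F 0 = 1 := by
    ext k
    rcases Nat.eq_zero_or_pos k with rfl | hk
    · simp [hF, hb0]
    · simp [hF, hzero k hk, coeff_one, Nat.pos_iff_ne_zero.mp hk]
  -- F (1 + u)
  have hFh : ∀ k, (PowerSeries.coeff (R := R) k) (F (1 + u)) = ∑ j ∈ Finset.range (k + 1), u ^ j := by
    intro k
    have hb1' : ∀ i : ℕ, b i (1 : R) = 1 := by
      intro i
      rcases Nat.eq_zero_or_pos i with rfl | hi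
      · exact hb0 1
      · exact hone i hi
    rw [hF]
    simp only [coeff_mk, hadd k 1 u, hb1', hu, one_mul]
    rw [← Finset.sum_range_reflect (fun j => u ^ j) (k+1)]
    refine Finset.sum_congr rfl fun j hj => ?_
    first
    | rfl
    | (congr 1; omega)
  -- key: (1-X)*(1-uX) * F(1+u) = 1
  set P : R⟦X⟧ := (1 - X) * (1 - PowerSeries.C (R := R) u * X) with hP
  have hinv : P * F (1 + u) = 1 := by
    have h1 : (1 - X) * F (1 + u) = PowerSeries.mk (fun k => u ^ k) := by
      ext k
      rw [sub_mul, one_mul, map_sub]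
      rcases Nat.eq_zero_or_pos k with rfl | hk
      · simp [hFh, coeff_zero_X_mul]
      · obtain ⟨j, rfl⟩ := Nat.exists_eq_add_of_le hk
        rw [add_comm 1 j, coeff_succ_X_mul, hFh, hFh, coeff_mk,
          Finset.sum_range_succ]
        ring
    rw [hP, mul_right_comm, h1, mul_comm]
    ext k
    rw [sub_mul, one_mul, map_sub]
    rcases Nat.eq_zero_or_pos k with rfl | hk
    · simp
    · obtain ⟨j, rfl⟩ := Nat.exists_eq_add_of_le hk
      rw [add_comm 1 j, mul_assoc, coeff_C_mul, coeff_succ_X_mul, coeff_mk, coeff_mk,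
        coeff_one, if_neg (by omega)]
      ring
  have hFneg : F (-(1 + u)) = P := by
    have h2 : F (-(1+u)) * F (1 + u) = 1 := by
      rw [← hmul, neg_add_cancel, hF0]
    calc F (-(1+u)) = F (-(1+u)) * (P * F (1+u)) := by rw [hinv, mul_one]
      _ = P * (F (-(1+u)) * F (1+u)) := by ring
      _ = P := by rw [h2, mul_one]
  -- F (-(m * (1+u))) = P ^ m
  have hFm : F (-((m : R) * (1 + u))) = P ^ m := by
    induction m with
    | zero => simpa using hF0
    | succ k ih =>
      have : -(((k : R) + 1) * (1 + u)) = -((k : R) * (1 + u)) + -(1 + u) := by ring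
      rw [Nat.cast_succ, this, hmul, ih, hFneg, pow_succ]
  -- extract coefficient n
  have := congrArg (PowerSeries.coeff (R := R) n) hFm
  rw [hF] at this
  simp only [coeff_mk] at this
  rw [this, hP, mul_pow, coeff_mul, Finset.Nat.sum_antidiagonal_eq_sum_range_succ_mk,
    Finset.mul_sum]
  apply Finset.sum_congr rfl
  intro i hi
  rw [Finset.mem_range, Nat.lt_succ_iff] at hi
  have e1 : (1 : R⟦X⟧) - X = 1 - PowerSeries.C (R := R) 1 * X := by simp
  rw [e1, coeff_one_sub_C_mul_X_pow, coeff_one_sub_C_mul_X_pow]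
  have : (-1 : R) ^ n = (-1 : R) ^ i * (-1 : R) ^ (n - i) := by
    rw [← pow_add]; congr 1; omega
  rw [neg_pow u, this]
  ring
end

section
/- Let R be a commutative ring equipped with a power structure (b_n)_{n∈ℕ}, and let u ∈ R be an element such that u² = 1 and b_j(u) = u^j for all j ∈ ℕ. Then for every integer m and every odd natural number n, there exists an integer c such that b_n(m·(1 + u)) = c·(1 + u). (This abstracts the paper's Lemma stating that a_n(m·ℍ) is hyperbolic in GW(k) whenever n is odd, where ℍ = ⟨1⟩ + ⟨−1⟩ and u = ⟨−1⟩; the proof pairs the i-th and (n−i)-th terms of the explicit summation formula.) -/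
/-- If `b` is a power structure on a commutative ring `R` and `u ∈ R` satisfies
`u ^ 2 = 1` and `b j u = u ^ j` for all `j`, then for every integer `m` and every
odd `n`, the element `b n (m • (1 + u))` is "hyperbolic": it is an integer multiple
of `1 + u`. -/
theorem power_structure_odd_symmetric_power_of_hyperbolic
    {R : Type*} [CommRing R] (b : ℕ → R → R)
    (hb0 : ∀ r : R, b 0 r = 1)
    (hb1 : ∀ r : R, b 1 r = r)
    (hzero : ∀ n : ℕ, 1 ≤ n → b n (0 : R) = 0)
    (hone : ∀ n : ℕ, 1 ≤ n → b n (1 : R) = 1)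
    (hadd : ∀ (n : ℕ) (r s : R),
      b n (r + s) = ∑ i ∈ Finset.range (n + 1), b i r * b (n - i) s)
    (u : R) (hu2 : u ^ 2 = 1) (hu : ∀ j : ℕ, b j u = u ^ j)
    (m : ℤ) (n : ℕ) (hn : Odd n) :
    ∃ c : ℤ, b n ((m : R) * (1 + u)) = (c : R) * (1 + u) := by
  set H : R := 1 + u with hH
  set InA : R → Prop := fun x => ∃ c d : ℤ, x = (c : R) + (d : R) * u with hInA
  set Hyp : R → Prop := fun x => ∃ c : ℤ, x = (c : R) * (1 + u) with hHyp
  -- basic closure properties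
  have hInA_mul : ∀ x y, InA x → InA y → InA (x * y) := by
    rintro x y ⟨c, d, rfl⟩ ⟨e, f, rfl⟩
    exact ⟨c * e + d * f, c * f + d * e, by push_cast; linear_combination (d : R) * f * hu2⟩
  have hInA_add : ∀ x y, InA x → InA y → InA (x + y) := by
    rintro x y ⟨c, d, rfl⟩ ⟨e, f, rfl⟩
    exact ⟨c + e, d + f, by push_cast; ring⟩
  have hInA_zero : InA 0 := ⟨0, 0, by push_cast; ring⟩
  have hInA_one : InA 1 := ⟨1, 0, by push_cast; ring⟩
  have hInA_neg : ∀ x, InA x → InA (-x) := by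
    rintro x ⟨c, d, rfl⟩
    exact ⟨-c, -d, by push_cast; ring⟩
  have hHyp_zero : Hyp 0 := ⟨0, by push_cast; ring⟩
  have hHyp_add : ∀ x y, Hyp x → Hyp y → Hyp (x + y) := by
    rintro x y ⟨c, rfl⟩ ⟨e, rfl⟩
    exact ⟨c + e, by push_cast; ring⟩
  have hHyp_neg : ∀ x, Hyp x → Hyp (-x) := by
    rintro x ⟨c, rfl⟩
    exact ⟨-c, by push_cast; ring⟩
  have hHyp_mul : ∀ x y, Hyp x → InA y → Hyp (x * y) := by
    rintro x y ⟨c, rfl⟩ ⟨e, f, rfl⟩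
    exact ⟨c * (e + f), by push_cast; linear_combination (c : R) * f * hu2⟩
  have hHyp_mul' : ∀ x y, InA x → Hyp y → Hyp (x * y) := by
    intro x y hx hy
    rw [mul_comm]; exact hHyp_mul y x hy hx
  have hpow2 : ∀ l : ℕ, u ^ (2 * l) = 1 := by
    intro l; rw [pow_mul, hu2, one_pow]
  have hInA_pow : ∀ i : ℕ, InA (u ^ i) := by
    intro i
    rcases Nat.even_or_odd i with ⟨l, hl⟩ | ⟨l, hl⟩
    · exact ⟨1, 0, by rw [hl, ← two_mul, hpow2]; push_cast; ring⟩
    · refine ⟨0, 1, ?_⟩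
      rw [hl, pow_succ, hpow2]; push_cast; ring
  -- b j H
  have hbH : ∀ j : ℕ, b j H = ∑ i ∈ Finset.range (j + 1), u ^ i := by
    intro j
    rw [hH, hadd j 1 u]
    rw [← Finset.sum_range_reflect]
    refine Finset.sum_congr rfl fun i hi => ?_
    simp only [Finset.mem_range] at hi
    have h3 : j + 1 - 1 - i = j - i := by omega
    rw [h3]
    have h1 : b (j - i) (1 : R) = 1 := by
      rcases Nat.eq_zero_or_pos (j - i) with h | h
      · rw [h, hb0]
      · exact hone _ h
    have h2 : j - (j - i) = i := by omega
    rw [h1, hu, h2, one_mul]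
  have hgeom : ∀ l : ℕ, ∑ i ∈ Finset.range (2 * l), u ^ i = (l : R) * (1 + u) := by
    intro l
    induction l with
    | zero => simp
    | succ l ih =>
      have : 2 * (l + 1) = 2 * l + 1 + 1 := by ring
      rw [this, Finset.sum_range_succ, Finset.sum_range_succ, ih, pow_succ, hpow2]
      push_cast; ring
  have hbH_InA : ∀ j : ℕ, InA (b j H) := by
    intro j
    rw [hbH]
    refine Finset.sum_induction _ _ hInA_add hInA_zero fun i _ => hInA_pow i
  have hbH_odd : ∀ j : ℕ, Odd j → Hyp (b j H) := by
    rintro j ⟨l, hl⟩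
    rw [hbH]
    have : j + 1 = 2 * (l + 1) := by omega
    rw [this, hgeom]
    exact ⟨l + 1, by push_cast; ring⟩
  -- main predicate
  set P : R → Prop := fun x => ∀ k : ℕ, InA (b k x) ∧ (Odd k → Hyp (b k x)) with hP
  have hP0 : P 0 := by
    intro k
    rcases Nat.eq_zero_or_pos k with h | h
    · subst h
      exact ⟨by rw [hb0]; exact hInA_one, fun hk => absurd hk (by simp)⟩
    · rw [hzero k h]
      exact ⟨hInA_zero, fun _ => hHyp_zero⟩
  have hPstep : ∀ x, P x → P (x + H) := by
    intro x hx k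
    rw [hadd k x H]
    constructor
    · refine Finset.sum_induction _ _ hInA_add hInA_zero fun i _ => ?_
      exact hInA_mul _ _ (hx i).1 (hbH_InA _)
    · intro hk
      refine Finset.sum_induction _ _ hHyp_add hHyp_zero fun i hi => ?_
      simp only [Finset.mem_range] at hi
      rcases Nat.even_or_odd i with he | ho
      · have : Odd (k - i) := by
          rcases hk with ⟨a, ha⟩; rcases he with ⟨c, hc⟩
          exact ⟨a - c, by omega⟩
        exact hHyp_mul' _ _ (hx i).1 (hbH_odd _ this)
      · exact hHyp_mul _ _ ((hx i).2 ho) (hbH_InA _)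
  have hPneg : ∀ x, P x → P (-x) := by
    intro x hx k
    induction k using Nat.strong_induction_on with
    | _ k ih =>
      rcases Nat.eq_zero_or_pos k with h | h
      · subst h
        exact ⟨by rw [hb0]; exact hInA_one, fun hk => absurd hk (by simp)⟩
      · have h0 : (0 : R) = ∑ i ∈ Finset.range (k + 1), b i x * b (k - i) (-x) := by
          rw [← hadd k x (-x)]
          rw [add_neg_cancel, hzero k h]
        rw [Finset.sum_range_succ'] at h0
        simp only [hb0, Nat.sub_zero, one_mul] at h0
        have hbk : b k (-x) =
            -∑ i ∈ Finset.range k, b (i + 1) x * b (k - (i + 1)) (-x) :=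
          eq_neg_of_add_eq_zero_right h0.symm
        rw [hbk]
        constructor
        · refine hInA_neg _ ?_
          refine Finset.sum_induction _ _ hInA_add hInA_zero fun i hi => ?_
          simp only [Finset.mem_range] at hi
          exact hInA_mul _ _ (hx (i + 1)).1 (ih (k - (i + 1)) (by omega)).1
        · intro hk
          refine hHyp_neg _ ?_
          refine Finset.sum_induction _ _ hHyp_add hHyp_zero fun i hi => ?_
          simp only [Finset.mem_range] at hi
          rcases Nat.even_or_odd (i + 1) with he | ho
          · have hsub : Odd (k - (i + 1)) := by
              rcases hk with ⟨a, ha⟩; rcases he with ⟨c, hc⟩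
              exact ⟨a - c, by omega⟩
            exact hHyp_mul' _ _ (hx (i + 1)).1
              ((ih (k - (i + 1)) (by omega)).2 hsub)
          · exact hHyp_mul _ _ ((hx (i + 1)).2 ho) (ih (k - (i + 1)) (by omega)).1
  have hPk : ∀ k : ℕ, P ((k : R) * H) := by
    intro k
    induction k with
    | zero => simpa using hP0
    | succ k ih =>
      have : ((k : R) + 1) * H = (k : R) * H + H := by ring
      push_cast
      rw [this]
      exact hPstep _ ih
  rcases Int.natAbs_eq m with hm | hm
  · have hmR : (m : R) = (m.natAbs : R) := by
      have h1 := congrArg (fun z : ℤ => (z : R)) hm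
      simp only [Int.cast_natCast] at h1
      exact h1
    have : (m : R) * (1 + u) = ((m.natAbs : R)) * H := by rw [hmR, hH]
    rw [this]
    exact (hPk m.natAbs n).2 hn
  · have hmR : (m : R) = -(m.natAbs : R) := by
      have h1 := congrArg (fun z : ℤ => (z : R)) hm
      simp only [Int.cast_neg, Int.cast_natCast] at h1
      exact h1
    have : (m : R) * (1 + u) = -(((m.natAbs : R)) * H) := by rw [hmR, hH]; ring
    rw [this]
    exact (hPneg _ (hPk m.natAbs) n).2 hn
end

section
/- Let R be a commutative ring equipped with a power structure (b_n)_{n∈ℕ}, and let u ∈ R be an element such that b_j(u) = u^j for all j ∈ ℕ. Then for all integers e ≥ 1, o ≥ 1 and every natural number n, b_n(e·1_R + o·u) = ∑_{i=0}^{n} C(e+n−i−1, n−i)·C(o+i−1, i)·u^i, where C denotes the binomial coefficient. (This abstracts the paper's Theorem computing the compactly supported A¹-Euler characteristic of symmetric powers of Grassmannians: in GW(k), with u = ⟨−1⟩, e = e(d,r) and o = o(d,r), it gives χ(Gr(d,r)^{(n)}) = a_n(e⟨1⟩ + o⟨−1⟩) = ∑_{i=0}^{n} C(e+n−i−1, n−i)·C(o+i−1,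 i)·⟨(−1)^i⟩.) -/
lemma power_structure_nsmul_aux {R : Type*} [CommRing R] (b : ℕ → R → R)
    (hadd : ∀ (n : ℕ) (r s : R),
      b n (r + s) = ∑ i ∈ Finset.range (n + 1), b i r * b (n - i) s)
    (r : R) (hr : ∀ j : ℕ, b j r = r ^ j) :
    ∀ m : ℕ, 1 ≤ m → ∀ n : ℕ, b n ((m : R) * r) = ((m + n - 1).choose n : R) * r ^ n := by
  intro m hm
  induction m with
  | zero => omega
  | succ m ih =>
    rcases Nat.eq_or_lt_of_le hm with h | h
    · intro n
      simp only [← h]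
      push_cast
      rw [one_mul, hr n]
      simp
    · have hm1 : 1 ≤ m := by omega
      intro n
      have : ((m + 1 : ℕ) : R) * r = (m : R) * r + r := by push_cast; ring
      rw [this, hadd]
      have hstep : ∀ i ∈ Finset.range (n + 1),
          b i ((m : R) * r) * b (n - i) r
            = ((i + (m - 1)).choose (m - 1) : R) * r ^ n := by
        intro i hi
        simp only [Finset.mem_range] at hi
        rw [ih hm1 i, hr (n - i), mul_assoc, ← pow_add,
          Nat.add_sub_cancel' (by omega : i ≤ n)]
        congr 2
        have h1 : m + i - 1 = i + (m - 1) := by omega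
        rw [h1, Nat.choose_symm_add]
      rw [Finset.sum_congr rfl hstep, ← Finset.sum_mul]
      have := Nat.sum_range_add_choose n (m - 1)
      have hcast : (∑ i ∈ Finset.range (n + 1), ((i + (m - 1)).choose (m - 1) : R))
          = ((n + (m - 1) + 1).choose (m - 1 + 1) : R) := by
        exact_mod_cast congrArg (Nat.cast : ℕ → R) this
      rw [hcast]
      have hfin : (n + (m - 1) + 1).choose (m - 1 + 1) = (m + 1 + n - 1).choose n := by
        have e1 : n + (m - 1) + 1 = n + m := by omega
        have e2 : m - 1 + 1 = m := by omega
        have e3 : m + 1 + n - 1 = n + m := by omega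
        rw [e1, e2, e3, Nat.choose_symm_add]
      rw [hfin]

/-- If `b` is a power structure on a commutative ring `R` and `u ∈ R` satisfies
`b j u = u ^ j` for all `j`, then for `e, o ≥ 1`,
`b n (e • 1 + o • u) = ∑_{i=0}^n C(e+n-i-1, n-i) * C(o+i-1, i) * u ^ i`.
This abstracts the Euler characteristic of symmetric powers of Grassmannians. -/
theorem power_structure_symmetric_power_grassmannian_formula
    {R : Type*} [CommRing R] (b : ℕ → R → R)
    (hb0 : ∀ r : R, b 0 r = 1)
    (hb1 : ∀ r : R, b 1 r = r)
    (hzero : ∀ n : ℕ, 1 ≤ n → b n (0 : R) = 0)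
    (hone : ∀ n : ℕ, 1 ≤ n → b n (1 : R) = 1)
    (hadd : ∀ (n : ℕ) (r s : R),
      b n (r + s) = ∑ i ∈ Finset.range (n + 1), b i r * b (n - i) s)
    (u : R) (hu : ∀ j : ℕ, b j u = u ^ j)
    (e o : ℕ) (he : 1 ≤ e) (ho : 1 ≤ o) (n : ℕ) :
    b n ((e : R) + (o : R) * u) =
      ∑ i ∈ Finset.range (n + 1),
        ((e + n - i - 1).choose (n - i) : R) * ((o + i - 1).choose i : R) * u ^ i := by
  have h1 : ∀ j : ℕ, b j (1 : R) = (1 : R) ^ j := by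
    intro j
    cases j with
    | zero => simpa using hb0 1
    | succ j => simpa using hone (j + 1) (by omega)
  have hE := power_structure_nsmul_aux b hadd 1 h1 e he
  have hO := power_structure_nsmul_aux b hadd u hu o ho
  have hcoe : ((e : R) + (o : R) * u) = (e : R) * 1 + (o : R) * u := by ring
  rw [hcoe, hadd]
  rw [← Finset.sum_range_reflect]
  refine Finset.sum_congr rfl ?_
  intro i hi
  simp only [Finset.mem_range] at hi
  have hi' : i ≤ n := by omega
  have h2 : n + 1 - 1 - i = n - i := by omega
  rw [h2, hE (n - i), hO (n - (n - i)), Nat.sub_sub_self hi']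
  rw [one_pow, mul_one]
  have h3 : e + (n - i) - 1 = e + n - i - 1 := by omega
  rw [h3]; ring
end

section
/- For every natural number r ≥ 1 and every odd natural number d, the doubled Losanitsch numbers satisfy the recurrences E(d, r) = E(d−1, r−1) + O(d, r−1) and O(d, r) = O(d−1, r−1) + E(d, r−1). (This is the odd-index recurrence relation for Losanitsch's triangle and its complement in Pascal's triangle, stated via the closed formulas; the paper proves the closed formula by induction from these recurrences.) -/
/-- `ε(r,d) = 1` if `r` is odd or both `r` and `d` are even, and `0` otherwise. -/
def losEps (r d : ℕ) : ℤ := if Odd r ∨ (Even r ∧ Even d) then 1 else 0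

/-- The doubled Losanitsch number `E(d,r) = C(r,d) + ε(r,d)·C(⌊r/2⌋,⌊d/2⌋)`. -/
def losE (d r : ℕ) : ℤ := (r.choose d : ℤ) + losEps r d * ((r / 2).choose (d / 2) : ℤ)

/-- The doubled complement `O(d,r) = C(r,d) − ε(r,d)·C(⌊r/2⌋,⌊d/2⌋)`. -/
def losO (d r : ℕ) : ℤ := (r.choose d : ℤ) - losEps r d * ((r / 2).choose (d / 2) : ℤ)

/-- The odd-index recurrences for Losanitsch's triangle and its complement:
for `r ≥ 1` and odd `d`, `E(d,r) = E(d-1,r-1) + O(d,r-1)` and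
`O(d,r) = O(d-1,r-1) + E(d,r-1)`. -/
theorem losanitsch_odd_recurrence (d r : ℕ) (hr : 1 ≤ r) (hd : Odd d) :
    losE d r = losE (d - 1) (r - 1) + losO d (r - 1) ∧
      losO d r = losO (d - 1) (r - 1) + losE d (r - 1) := by
  obtain ⟨k, rfl⟩ := hd
  obtain ⟨s, rfl⟩ := Nat.exists_eq_add_of_le hr
  have hc : (1 + s).choose (2 * k + 1) = s.choose (2 * k) + s.choose (2 * k + 1) := by
    rw [Nat.add_comm 1 s]; exact Nat.choose_succ_succ s (2 * k)
  have hd1 : 2 * k + 1 - 1 = 2 * k := rfl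
  have hr1 : 1 + s - 1 = s := by omega
  have hdiv1 : (2 * k + 1) / 2 = k := by omega
  have hdiv2 : (2 * k) / 2 = k := by omega
  rcases Nat.even_or_odd s with ⟨m, rfl⟩ | ⟨m, rfl⟩
  · have e1 : Odd (1 + (m + m)) := ⟨m, by ring⟩
    have e3 : Even (m + m) := ⟨m, rfl⟩
    have e2 : ¬ Odd (m + m) := Nat.not_odd_iff_even.mpr e3
    have e4 : ¬ Even (2 * k + 1) := by simp [Nat.even_add_one, Nat.even_mul]
    have e5 : Even (2 * k) := ⟨k, by ring⟩
    have hdm : (1 + (m + m)) / 2 = m := by omega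
    have hdm2 : (m + m) / 2 = m := by omega
    simp only [losE, losO, losEps, hd1, hr1, hdiv1, hdiv2, hdm, hdm2, hc,
      if_pos (Or.inl e1), if_neg (by tauto : ¬ (Odd (m + m) ∨ Even (m + m) ∧ Even (2 * k + 1))),
      if_pos (Or.inr ⟨e3, e5⟩ : Odd (m + m) ∨ Even (m + m) ∧ Even (2 * k))]
    push_cast
    constructor <;> ring
  · have e1 : ¬ Odd (1 + (2 * m + 1)) := by simp [Nat.odd_add_one, Nat.even_add_one, Nat.even_mul]
    have e3 : Even (1 + (2 * m + 1)) := ⟨m + 1, by ring⟩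
    have e4 : ¬ Even (2 * k + 1) := by simp [Nat.even_add_one, Nat.even_mul]
    have e5 : Odd (2 * m + 1) := ⟨m, rfl⟩
    have hdm : (2 * m + 1) / 2 = m := by omega
    simp only [losE, losO, losEps, hd1, hr1, hdiv1, hdiv2, hdm, hc,
      if_neg (by tauto : ¬ (Odd (1 + (2 * m + 1)) ∨ Even (1 + (2 * m + 1)) ∧ Even (2 * k + 1))),
      if_pos (Or.inl e5 : Odd (2 * m + 1) ∨ Even (2 * m + 1) ∧ Even (2 * k)),
      if_pos (Or.inl e5 : Odd (2 * m + 1) ∨ Even (2 * m + 1) ∧ Even (2 * k + 1))]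
    push_cast
    constructor <;> ring
end

section
/- Let R be a commutative ring and let u ∈ R satisfy u² = 1. Suppose f : ℕ → ℕ → R satisfies: f(0, r) = 1 for all r; f(d, r) = 0 whenever d > r; and the recursion f(d, r) = f(d−1, r−1) + u^d·f(d, r−1) for all d ≥ 1 and r ≥ 1. Then for all d ≤ r one has 2·f(d, r) = E(d, r)·1_R + O(d, r)·u, and in fact f(d, r) = e(d,r)·1_R + o(d,r)·u where e(d,r) = E(d,r)/2 and o(d,r) = O(d,r)/2 are natural numbers. (This abstracts the paper's Theorem computing the compactly supported A¹-Euler characteristic of the Grassmannian: in GW(k), with u = ⟨−1⟩ and f(d,r) = χ(Gr(d,r)), the recursion χ(Gr(d,r)) = χ(Gr(d−1,r−1)) + ⟨(−1)^d⟩·χ(Gr(d,r−1)) yields χ(Gr(d,r)) = e(d,r)⟨1⟩ + o(d,r)⟨−1⟩.) -/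
lemma losEps_oddl (s d : ℕ) : losEps (2*s+1) d = 1 := by
  simp [losEps, Nat.odd_iff, Nat.even_iff]

lemma losEps_ee (s m : ℕ) : losEps (2*s) (2*m) = 1 := by
  simp [losEps, Nat.odd_iff, Nat.even_iff]

lemma losEps_eo (s m : ℕ) : losEps (2*s) (2*m+1) = 0 := by
  simp [losEps, Nat.odd_iff, Nat.even_iff]

lemma pasc (t m : ℕ) : (t+1).choose (m+1) = t.choose m + t.choose (m+1) :=
  Nat.choose_succ_succ t m

lemma los_rec_even (m r : ℕ) (hr : 1 ≤ r) :
    losE (2*m+2) r = losE (2*m+1) (r-1) + losE (2*m+2) (r-1) ∧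
    losO (2*m+2) r = losO (2*m+1) (r-1) + losO (2*m+2) (r-1) := by
  rcases Nat.even_or_odd r with h | h
  · obtain ⟨t, rfl⟩ : ∃ t, r = 2*t+2 := by rcases h with ⟨k, hk⟩; exact ⟨k-1, by omega⟩
    rw [show 2*t+2-1 = 2*t+1 by omega]
    have ha : losEps (2*t+2) (2*m+2) = 1 := by
      rw [show 2*t+2 = 2*(t+1) by ring, show 2*m+2 = 2*(m+1) by ring]; exact losEps_ee _ _
    simp only [losE, losO, ha, losEps_oddl,
      show (2*t+2)/2 = t+1 by omega, show (2*m+2)/2 = m+1 by omega,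
      show (2*t+1)/2 = t by omega, show (2*m+1)/2 = m by omega]
    have h1 : (2*t+2).choose (2*m+2) = (2*t+1).choose (2*m+1) + (2*t+1).choose (2*m+2) := by
      rw [show 2*t+2 = (2*t+1)+1 by ring, show 2*m+2 = (2*m+1)+1 by ring]; exact pasc _ _
    have h2 : (t+1).choose (m+1) = t.choose m + t.choose (m+1) := pasc t m
    constructor <;> (push_cast [h1, h2]; ring)
  · obtain ⟨t, rfl⟩ : ∃ t, r = 2*t+1 := by rcases h with ⟨k, hk⟩; exact ⟨k, by omega⟩
    rw [show 2*t+1-1 = 2*t by omega]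
    have ha : losEps (2*t) (2*m+2) = 1 := by
      rw [show 2*m+2 = 2*(m+1) by ring]; exact losEps_ee _ _
    have hb : losEps (2*t) (2*m+1) = 0 := losEps_eo _ _
    simp only [losE, losO, losEps_oddl, ha, hb,
      show (2*t+1)/2 = t by omega, show (2*m+2)/2 = m+1 by omega,
      show (2*t)/2 = t by omega, show (2*m+1)/2 = m by omega]
    have h1 : (2*t+1).choose (2*m+2) = (2*t).choose (2*m+1) + (2*t).choose (2*m+2) := by
      rw [show 2*t+1 = (2*t)+1 by ring, show 2*m+2 = (2*m+1)+1 by ring]; exact pasc _ _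
    constructor <;> (push_cast [h1]; ring)

lemma los_rec_odd (m r : ℕ) (hr : 1 ≤ r) :
    losE (2*m+1) r = losE (2*m) (r-1) + losO (2*m+1) (r-1) ∧
    losO (2*m+1) r = losO (2*m) (r-1) + losE (2*m+1) (r-1) := by
  rcases Nat.even_or_odd r with h | h
  · obtain ⟨t, rfl⟩ : ∃ t, r = 2*t+2 := by rcases h with ⟨k, hk⟩; exact ⟨k-1, by omega⟩
    rw [show 2*t+2-1 = 2*t+1 by omega]
    have ha : losEps (2*t+2) (2*m+1) = 0 := by
      rw [show 2*t+2 = 2*(t+1) by ring]; exact losEps_eo _ _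
    simp only [losE, losO, losEps_oddl, ha,
      show (2*t+2)/2 = t+1 by omega, show (2*m+1)/2 = m by omega,
      show (2*t+1)/2 = t by omega, show (2*m)/2 = m by omega]
    have h1 : (2*t+2).choose (2*m+1) = (2*t+1).choose (2*m) + (2*t+1).choose (2*m+1) := by
      rw [show 2*t+2 = (2*t+1)+1 by ring, show 2*m+1 = (2*m)+1 by ring]; exact pasc _ _
    constructor <;> (push_cast [h1]; ring)
  · obtain ⟨t, rfl⟩ : ∃ t, r = 2*t+1 := by rcases h with ⟨k, hk⟩; exact ⟨k, by omega⟩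
    rw [show 2*t+1-1 = 2*t by omega]
    have hb : losEps (2*t) (2*m+1) = 0 := losEps_eo _ _
    simp only [losE, losO, losEps_oddl, losEps_ee, hb,
      show (2*t+1)/2 = t by omega, show (2*m+1)/2 = m by omega,
      show (2*t)/2 = t by omega, show (2*m)/2 = m by omega]
    have h1 : (2*t+1).choose (2*m+1) = (2*t).choose (2*m) + (2*t).choose (2*m+1) := by
      rw [show 2*t+1 = (2*t)+1 by ring, show 2*m+1 = (2*m)+1 by ring]; exact pasc _ _
    constructor <;> (push_cast [h1]; ring)

lemma losEps_diag (d : ℕ) : losEps d d = 1 := by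
  unfold losEps
  rw [if_pos]
  rcases Nat.even_or_odd d with h | h
  · exact Or.inr ⟨h, h⟩
  · exact Or.inl h

lemma losE_diag (d : ℕ) : losE d d = 2 := by simp [losE, losEps_diag]

lemma losO_diag (d : ℕ) : losO d d = 0 := by simp [losO, losEps_diag]

lemma losEps_zero (r : ℕ) : losEps r 0 = 1 := by
  unfold losEps
  rw [if_pos]
  rcases Nat.even_or_odd r with h | h
  · exact Or.inr ⟨h, Even.zero⟩
  · exact Or.inl h

lemma losE_zero (r : ℕ) : losE 0 r = 2 := by simp [losE, losEps_zero]

lemma losO_zero (r : ℕ) : losO 0 r = 0 := by simp [losO, losEps_zero]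

/-- Abstract form of the computation of `χ(Gr(d,r))`: if `u² = 1` and
`f : ℕ → ℕ → R` satisfies `f 0 r = 1`, `f d r = 0` for `d > r`, and the recursion
`f d r = f (d-1) (r-1) + u^d · f d (r-1)` for `d, r ≥ 1`, then for all `d ≤ r`,
`2·f(d,r) = E(d,r)·1 + O(d,r)·u`, and indeed `f(d,r) = e(d,r)·1 + o(d,r)·u` for
natural numbers `e(d,r) = E(d,r)/2` and `o(d,r) = O(d,r)/2`. -/
theorem euler_characteristic_grassmannian_abstract
    {R : Type*} [CommRing R] (u : R) (hu2 : u ^ 2 = 1)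
    (f : ℕ → ℕ → R)
    (hf0 : ∀ r : ℕ, f 0 r = 1)
    (hftop : ∀ d r : ℕ, r < d → f d r = 0)
    (hfrec : ∀ d r : ℕ, 1 ≤ d → 1 ≤ r →
      f d r = f (d - 1) (r - 1) + u ^ d * f d (r - 1))
    (d r : ℕ) (hdr : d ≤ r) :
    (2 : R) * f d r = (losE d r : R) + (losO d r : R) * u ∧
      ∃ e o : ℕ, losE d r = 2 * (e : ℤ) ∧ losO d r = 2 * (o : ℤ) ∧
        f d r = (e : R) + (o : R) * u := by
  have huu : u * u = 1 := by rw [← sq]; exact hu2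
  have hueven : ∀ m : ℕ, u ^ (2*m) = 1 := fun m => by rw [pow_mul, hu2, one_pow]
  have huodd : ∀ m : ℕ, u ^ (2*m+1) = u := fun m => by
    rw [pow_succ, hueven, one_mul]
  have hdiag : ∀ d : ℕ, f d d = 1 := by
    intro d
    induction d with
    | zero => exact hf0 0
    | succ n ih =>
      rw [hfrec (n+1) (n+1) (by omega) (by omega)]
      simp only [Nat.add_sub_cancel]
      rw [hftop (n+1) n (by omega), ih]
      ring
  induction r generalizing d with
  | zero =>
    interval_cases d
    rw [hf0, losE_zero, losO_zero]
    exact ⟨by push_cast; ring, 1, 0, by norm_num, by norm_num, by push_cast; ring⟩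
  | succ r ih =>
    rcases d with _ | d
    · rw [hf0, losE_zero, losO_zero]
      exact ⟨by push_cast; ring, 1, 0, by norm_num, by norm_num, by push_cast; ring⟩
    rcases eq_or_lt_of_le hdr with heq | hlt
    · have hh : d + 1 = r + 1 := heq
      rw [← hh, hdiag, losE_diag, losO_diag]
      exact ⟨by push_cast; ring, 1, 0, by norm_num, by norm_num, by push_cast; ring⟩
    have hd1 : d ≤ r := by omega
    have hd2 : d + 1 ≤ r := by omega
    obtain ⟨H1, e1, o1, hE1, hO1, Hf1⟩ := ih d hd1
    obtain ⟨H2, e2, o2, hE2, hO2, Hf2⟩ := ih (d+1) hd2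
    have hrw : f (d+1) (r+1) = f d r + u ^ (d+1) * f (d+1) r := by
      rw [hfrec (d+1) (r+1) (by omega) (by omega)]
      simp only [Nat.add_sub_cancel]
    rcases Nat.even_or_odd (d+1) with h | h
    · obtain ⟨m, hm⟩ : ∃ m, d + 1 = 2*m+2 := by rcases h with ⟨k, hk⟩; exact ⟨k-1, by omega⟩
      obtain ⟨hEr, hOr⟩ := los_rec_even m (r+1) (by omega)
      rw [show 2*m+2 = d+1 by omega, show 2*m+1 = d by omega, Nat.add_sub_cancel] at hEr hOr
      rw [hrw, show u ^ (d+1) = 1 by rw [hm, show 2*m+2 = 2*(m+1) by ring]; exact hueven (m+1),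
        hEr, hOr]
      constructor
      · push_cast
        linear_combination H1 + H2
      · refine ⟨e1 + e2, o1 + o2, by push_cast; omega, by push_cast; omega, ?_⟩
        rw [one_mul, Hf1, Hf2]
        push_cast
        ring
    · obtain ⟨m, hm⟩ : ∃ m, d + 1 = 2*m+1 := by rcases h with ⟨k, hk⟩; exact ⟨k, by omega⟩
      obtain ⟨hEr, hOr⟩ := los_rec_odd m (r+1) (by omega)
      rw [show 2*m+1 = d+1 by omega, show 2*m = d by omega, Nat.add_sub_cancel] at hEr hOr
      rw [hrw, show u ^ (d+1) = u by rw [hm]; exact huodd m, hEr, hOr]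
      constructor
      · push_cast
        linear_combination H1 + u * H2 + ((losO (d+1) r : ℤ) : R) * huu
      · refine ⟨e1 + o2, o1 + e2, by push_cast; omega, by push_cast; omega, ?_⟩
        rw [Hf1, Hf2]
        push_cast
        linear_combination ((o2 : ℕ) : R) * huu
end
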